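/- Every n×n matrix A over a commutative supertropical semiring satisfies its tangible characteristic polynomial up to ghost: if f_A(λ) = |A + λI| = Σ α_i λ^i, then Σ ν̂(α_i) A^i is a ghost matrix (every entry is a ghost). -/

import Mathlib

/-- A supertropical semiring: a semiring with a ghost ideal `isGhost`,
whose ghost map `ν a = a + a` is an idempotent map into the ghost ideal,
satisfying the supertropical axioms. -/
class SupertropicalSemiring (R : Type*) extends Semiring R where
  isGhost : R → Prop
  ghost_zero : isGhost 0
  ghost_add : ∀ {a b : R}, isGhost a → isGhost b → isGhost (a + b)
  ghost_mul_left : ∀ (a : R) {b : R}, isGhost b → isGhost (a * b)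
  ghost_mul_right : ∀ (a : R) {b : R}, isGhost b → isGhost (b * a)
  nu_ghost : ∀ a : R, isGhost (a + a)
  nu_idem : ∀ a : R, (a + a) + (a + a) = a + a
  add_eq_nu : ∀ {a b : R}, a + a = b + b → a + b = a + a
  add_cases : ∀ {a b : R}, a + a ≠ b + b → a + b = a ∨ a + b = b

namespace ST

variable {R : Type*}

/-- The ghost predicate. -/
abbrev ghost [SupertropicalSemiring R] (a : R) : Prop := SupertropicalSemiring.isGhost a

/-- `a` is tangible if it is not a ghost (in particular `a ≠ 0`). -/
abbrev tangible [SupertropicalSemiring R] (a : R) : Prop := ¬ ghost a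

/-- `a` lies in `T₀ = T ∪ {0}`. -/
abbrev tangible0 [SupertropicalSemiring R] (a : R) : Prop := a = 0 ∨ tangible a

/-- `b` ghost-surpasses `a`: `b = a + ghost`. -/
def GS [SupertropicalSemiring R] (b a : R) : Prop := ∃ c : R, ghost c ∧ b = a + c

/-- `a` and `b` are ν-matched: `ν a = ν b`. -/
def nuEq [SupertropicalSemiring R] (a b : R) : Prop := a + a = b + b

/-- `a ≤_ν b`, i.e. `ν a ≤ ν b` in the ordered ghost ideal. -/
def nuLe [SupertropicalSemiring R] (a b : R) : Prop := (a + a) + (b + b) = b + b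

end ST

/-- A supertropical domain: a commutative supertropical semiring in which the
tangible elements form a multiplicative monoid and `ν` maps the tangibles onto
the nonzero ghosts. -/
class SupertropicalDomain (R : Type*) extends SupertropicalSemiring R where
  mul_comm : ∀ a b : R, a * b = b * a
  one_tangible : ¬ isGhost 1
  tangible_mul : ∀ {a b : R}, ¬ isGhost a → ¬ isGhost b → ¬ isGhost (a * b)
  nu_onto : ∀ {g : R}, isGhost g → g ≠ 0 → ∃ t : R, ¬ isGhost t ∧ t + t = g

/-- A supertropical semifield: every tangible element is invertible. -/
class SupertropicalSemifield (R : Type*) extends SupertropicalDomain R where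
  tangible_inv : ∀ {a : R}, ¬ isGhost a → ∃ b : R, ¬ isGhost b ∧ a * b = 1

namespace ST

/-- A tangible retract function `ν̂ : R → T₀`: the identity on `T₀`, and a
section of `ν` on the ghost ideal. -/
structure TangibleRetract (R : Type*) [SupertropicalSemiring R] where
  toFun : R → R
  mem_T0 : ∀ a : R, tangible0 (toFun a)
  id_on_T0 : ∀ a : R, tangible0 a → toFun a = a
  nu_section : ∀ a : R, ghost a → toFun a + toFun a = a

instance (R : Type*) [SupertropicalSemiring R] :
    CoeFun (TangibleRetract R) (fun _ => R → R) := ⟨TangibleRetract.toFun⟩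

/-- The supertropical determinant (permanent) of a square matrix. -/
def per [Semiring R] {n : ℕ} (A : Matrix (Fin n) (Fin n) R) : R :=
  ∑ σ : Equiv.Perm (Fin n), (List.ofFn fun i => A i (σ i)).prod

/-- The supertropical adjoint: the transpose of the matrix of permanental
minors, `adj A i j = |A_{j,i}|`. -/
def adj [Semiring R] {n : ℕ} (A : Matrix (Fin (n + 1)) (Fin (n + 1)) R) :
    Matrix (Fin (n + 1)) (Fin (n + 1)) R :=
  fun i j => per (A.submatrix j.succAbove i.succAbove)

end ST

section Aux
open ST

variable {R : Type*} [SupertropicalDomain R]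

lemma ghost_nu (a : R) : ghost (a + a) := SupertropicalSemiring.nu_ghost a

lemma ghost_idem {a : R} (h : ghost a) : a + a = a := by
  rcases eq_or_ne a 0 with rfl | h0
  · simp
  · obtain ⟨t, _, ht⟩ := SupertropicalDomain.nu_onto h h0
    rw [← ht]; exact SupertropicalSemiring.nu_idem t

lemma nu_add (a b : R) : (a + b) + (a + b) = (a + a) + (b + b) := add_add_add_comm a b a b

lemma nu_sum {ι : Type*} (s : Finset ι) (f : ι → R) :
    (∑ x ∈ s, f x) + (∑ x ∈ s, f x) = ∑ x ∈ s, (f x + f x) :=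
  Finset.sum_add_distrib.symm

lemma add_trichotomy (a b : R) : ghost (a + b) ∨ a + b = a ∨ a + b = b := by
  by_cases h : a + a = b + b
  · left; rw [SupertropicalSemiring.add_eq_nu h]; exact ghost_nu a
  · right; exact SupertropicalSemiring.add_cases h

lemma sum_dichotomy {ι : Type*} (s : Finset ι) (f : ι → R) :
    ghost (∑ x ∈ s, f x) ∨ ∃ k ∈ s, (∑ x ∈ s, f x) = f k := by
  induction s using Finset.cons_induction with
  | empty => left; simpa using SupertropicalSemiring.ghost_zero
  | cons a s ha ih =>
    rw [Finset.sum_cons]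
    rcases ih with hg | ⟨k, hk, hs⟩
    · rcases add_trichotomy (f a) (∑ x ∈ s, f x) with h | h | h
      · exact Or.inl h
      · exact Or.inr ⟨a, Finset.mem_cons_self a s, h⟩
      · rw [h]; exact Or.inl hg
    · rw [hs]
      rcases add_trichotomy (f a) (f k) with h | h | h
      · exact Or.inl h
      · exact Or.inr ⟨a, Finset.mem_cons_self a s, h⟩
      · exact Or.inr ⟨k, Finset.mem_cons_of_mem hk, h⟩

lemma ghost_sum_eq {ι : Type*} (s : Finset ι) (f : ι → R) (hne : s.Nonempty)
    (hg : ∀ x ∈ s, ghost (f x)) : ∃ k ∈ s, (∑ x ∈ s, f x) = f k := by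
  induction s using Finset.cons_induction with
  | empty => exact absurd hne (by simp)
  | cons a s ha ih =>
    rw [Finset.sum_cons]
    rcases s.eq_empty_or_nonempty with rfl | hs
    · exact ⟨a, Finset.mem_cons_self a _, by simp⟩
    · obtain ⟨k, hk, hsum⟩ := ih hs (fun x hx => hg x (Finset.mem_cons_of_mem hx))
      rw [hsum]
      by_cases h : f a + f a = f k + f k
      · have h1 := ghost_idem (hg a (Finset.mem_cons_self a s))
        have h2 := ghost_idem (hg k (Finset.mem_cons_of_mem hk))
        have hfa : f a = f k := by rw [h1, h2] at h; exact h
        refine ⟨a, Finset.mem_cons_self a s, ?_⟩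
        rw [SupertropicalSemiring.add_eq_nu h, h1]
      · rcases SupertropicalSemiring.add_cases h with h' | h'
        · exact ⟨a, Finset.mem_cons_self a s, h'⟩
        · exact ⟨k, Finset.mem_cons_of_mem hk, h'⟩

lemma absorb {ι : Type*} {s : Finset ι} {f : ι → R} {k : ι} (hk : k ∈ s)
    (hg : ghost (f k)) : f k + ∑ x ∈ s, f x = ∑ x ∈ s, f x := by
  classical
  rw [← Finset.add_sum_erase s f hk, ← add_assoc, ghost_idem hg]

lemma ghost_sum_of_matched {ι : Type*} (K : Finset ℕ) (c : ℕ → R) (X : ℕ → Finset ι)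
    (t : ι → R)
    (hc : ∀ k ∈ K, c k + c k = ∑ x ∈ X k, (t x + t x))
    (hmatch : ∀ k ∈ K, ∀ x ∈ X k, ∃ k', k' ∈ K ∧ k' ≠ k ∧ ∃ y ∈ X k', t y = t x) :
    ghost (∑ k ∈ K, c k) := by
  by_contra hng
  obtain ⟨k₀, hk₀, hs⟩ := (sum_dichotomy K c).resolve_left hng
  have hnus : (∑ k ∈ K, c k) + (∑ k ∈ K, c k) = ∑ k ∈ K, (c k + c k) := nu_sum K c
  have hnu0 : c k₀ + c k₀ = ∑ k ∈ K, (c k + c k) := by rw [← hs]; exact hnus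
  rcases (X k₀).eq_empty_or_nonempty with hXe | hXne
  · have hz : c k₀ + c k₀ = 0 := by rw [hc k₀ hk₀, hXe, Finset.sum_empty]
    have h0 : c k₀ + c k₀ = (0:R) + 0 := by rw [hz, add_zero]
    have := SupertropicalSemiring.add_eq_nu h0
    rw [add_zero, hz] at this
    rw [hs] at hng
    rw [this] at hng
    exact hng SupertropicalSemiring.ghost_zero
  · obtain ⟨x₀, hx₀, hsum0⟩ := ghost_sum_eq (X k₀) (fun x => t x + t x) hXne
      (fun x _ => ghost_nu (t x))
    have hck0 : c k₀ + c k₀ = t x₀ + t x₀ := by rw [hc k₀ hk₀]; exact hsum0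
    obtain ⟨k₁, hk₁K, hk₁ne, y, hy, hty⟩ := hmatch k₀ hk₀ x₀ hx₀
    have h1 : (c k₀ + c k₀) + (c k₁ + c k₁) = c k₁ + c k₁ := by
      rw [hck0, ← hty, hc k₁ hk₁K]
      exact absorb (f := fun x => t x + t x) hy (ghost_nu (t y))
    have h2 : (c k₁ + c k₁) + (c k₀ + c k₀) = c k₀ + c k₀ := by
      rw [hnu0]
      exact absorb (f := fun k => c k + c k) hk₁K (ghost_nu (c k₁))
    have heq : c k₀ + c k₀ = c k₁ + c k₁ := by
      conv_lhs => rw [← h2, add_comm]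
      exact h1
    have hdec : (∑ k ∈ K, c k) = (c k₀ + c k₁) + ∑ k ∈ (K.erase k₀).erase k₁, c k := by
      rw [← Finset.add_sum_erase K c hk₀,
        ← Finset.add_sum_erase _ c (Finset.mem_erase.mpr ⟨hk₁ne, hk₁K⟩), add_assoc]
    set r := ∑ k ∈ (K.erase k₀).erase k₁, c k with hr
    have hgnu : (c k₀ + c k₁) + (c k₀ + c k₁) = c k₀ + c k₀ := by
      rw [nu_add, ← heq]
      exact SupertropicalSemiring.nu_idem _
    by_cases hrg : (c k₀ + c k₁) + (c k₀ + c k₁) = r + r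
    · have : (c k₀ + c k₁) + r = (c k₀ + c k₁) + (c k₀ + c k₁) :=
        SupertropicalSemiring.add_eq_nu hrg
      rw [this] at hdec
      exact hng (by rw [hdec]; exact ghost_nu _)
    · rcases SupertropicalSemiring.add_cases hrg with h' | h'
      · rw [h'] at hdec
        exact hng (by rw [hdec, SupertropicalSemiring.add_eq_nu heq]; exact ghost_nu _)
      · rw [h'] at hdec
        apply hrg
        rw [hgnu, ← hs, hdec]
end Aux

section Paths

variable {S : Type*} [CommSemiring S] {n : ℕ}

/-- Product of the entries of `A` along the edges of a vertex list. -/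
def EW (A : Matrix (Fin n) (Fin n) S) : List (Fin n) → S
  | [] => 1
  | [_] => 1
  | a :: b :: l => A a b * EW A (b :: l)

variable (A : Matrix (Fin n) (Fin n) S)

@[simp] lemma EW_nil : EW A [] = 1 := rfl
@[simp] lemma EW_single (a : Fin n) : EW A [a] = 1 := rfl
@[simp] lemma EW_cons_cons (a b : Fin n) (l : List (Fin n)) :
    EW A (a :: b :: l) = A a b * EW A (b :: l) := rfl

lemma EW_split (u : List (Fin n)) (a : Fin n) (w : List (Fin n)) :
    EW A (u ++ a :: w) = EW A (u ++ [a]) * EW A (a :: w) := by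
  induction u with
  | nil => simp
  | cons x u ih =>
    cases u with
    | nil => simp [mul_assoc]
    | cons y u' =>
      simp only [List.cons_append, EW_cons_cons] at *
      rw [ih, mul_assoc]

lemma getLastD_ne_nil {α : Type*} (l : List α) (h : l ≠ []) (d d' : α) :
    l.getLastD d = l.getLastD d' := by
  cases l with
  | nil => exact absurd rfl h
  | cons x l => rw [List.getLastD_cons, List.getLastD_cons]

lemma getLast?_eq_getLastD {α : Type*} (l : List α) (h : l ≠ []) : ∀ d : α,
    l.getLast? = some (l.getLastD d) := by
  induction l with
  | nil => exact absurd rfl h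
  | cons x l ih =>
    intro d
    cases l with
    | nil => simp
    | cons y l' =>
      rw [List.getLast?_cons_cons, List.getLastD_cons, ih (by simp) x]

lemma EW_concat (l : List (Fin n)) (h : l ≠ []) (b d : Fin n) :
    EW A (l ++ [b]) = EW A l * A (l.getLastD d) b := by
  induction l with
  | nil => exact absurd rfl h
  | cons x l ih =>
    cases l with
    | nil => simp
    | cons y l' =>
      simp only [List.cons_append, EW_cons_cons, List.getLastD_cons]
      rw [← List.cons_append, ih (by simp), List.getLastD_cons, mul_assoc]

/-- The finset of lists over `Fin n` of length `k`. -/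
def listsLen (k : ℕ) : Finset (List (Fin n)) :=
  Finset.image (fun f : Fin k → Fin n => List.ofFn f) Finset.univ

lemma mem_listsLen {k : ℕ} {l : List (Fin n)} : l ∈ listsLen k ↔ l.length = k := by
  constructor
  · rintro h
    obtain ⟨f, -, rfl⟩ := Finset.mem_image.mp h
    simp
  · intro h
    refine Finset.mem_image.mpr ⟨fun m => l.get (Fin.cast h.symm m), Finset.mem_univ _, ?_⟩
    apply List.ext_getElem
    · simp [h]
    · intro m h1 h2
      simp [List.getElem_ofFn]

/-- Paths: vertex lists of length `k+1` from `i` to `j`. -/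
def VS (i j : Fin n) (k : ℕ) : Finset (List (Fin n)) :=
  (listsLen (k + 1)).filter (fun l => l.head? = some i ∧ l.getLast? = some j)

lemma mem_VS {i j : Fin n} {k : ℕ} {l : List (Fin n)} :
    l ∈ VS i j k ↔ l.length = k + 1 ∧ l.head? = some i ∧ l.getLast? = some j := by
  simp [VS, mem_listsLen, and_assoc]

lemma pow_apply_eq_sum_VS (i j : Fin n) (k : ℕ) :
    (A ^ k) i j = ∑ l ∈ VS i j k, EW A l := by
  induction k generalizing j with
  | zero =>
    by_cases hij : i = j
    · subst hij
      have : VS i i 0 = {[i]} := by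
        ext l
        rw [mem_VS]
        constructor
        · rintro ⟨hl, hh, hg⟩
          match l, hl with
          | [x], _ =>
            simp only [List.head?_cons, Option.some.injEq] at hh
            simp [hh]
        · intro h
          rw [Finset.mem_singleton] at h
          subst h; simp
      rw [this, pow_zero]
      simp [Matrix.one_apply_eq]
    · have : VS i j 0 = ∅ := by
        ext l
        rw [mem_VS]
        simp only [Finset.notMem_empty, iff_false]
        rintro ⟨hl, hh, hg⟩
        match l, hl with
        | [x], _ =>
          simp only [List.head?_cons, Option.some.injEq] at hh
          simp only [List.getLast?_singleton, Option.some.injEq] at hg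
          exact hij (hh ▸ hg)
      rw [this, pow_zero, Matrix.one_apply_ne hij]
      simp
  | succ k ih =>
    rw [pow_succ, Matrix.mul_apply]
    have : ∀ a, (A ^ k) i a * A a j = ∑ l ∈ VS i a k, EW A l * A a j := by
      intro a; rw [ih a, Finset.sum_mul]
    simp only [this]
    rw [Finset.sum_sigma']
    refine Finset.sum_nbij' (fun x => x.2 ++ [j])
      (fun l => ⟨l.dropLast.getLastD i, l.dropLast⟩) ?_ ?_ ?_ ?_ ?_
    · rintro ⟨a, l⟩ hx
      simp only [Finset.mem_sigma, Finset.mem_univ, true_and] at hx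
      rw [mem_VS] at hx ⊢
      obtain ⟨hl, hh, hg⟩ := hx
      have hne : l ≠ [] := by intro h; rw [h] at hl; simp at hl
      refine ⟨by simp [hl], ?_, by simp⟩
      cases l with
      | nil => exact absurd rfl hne
      | cons x l' => simpa using hh
    · intro l hl
      rw [mem_VS] at hl
      obtain ⟨hl1, hh, hg⟩ := hl
      have hne : l.dropLast ≠ [] := by
        have : l.dropLast.length = k + 1 := by
          rw [List.length_dropLast, hl1]; rfl
        intro h; rw [h] at this; simp at this
      simp only [Finset.mem_sigma, Finset.mem_univ, true_and]
      rw [mem_VS]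
      refine ⟨by rw [List.length_dropLast, hl1]; rfl, ?_, getLast?_eq_getLastD _ hne i⟩
      cases hld : l.dropLast with
      | nil => exact absurd hld hne
      | cons x l' =>
        have : l = x :: (l' ++ [l.getLast (by intro h; rw [h] at hl1; simp at hl1)]) := by
          conv_lhs => rw [← List.dropLast_append_getLast
            (l := l) (by intro h; rw [h] at hl1; simp at hl1)]
          rw [hld]; simp
        rw [this] at hh
        simpa using hh
    · rintro ⟨a, l⟩ hx
      simp only [Finset.mem_sigma, Finset.mem_univ, true_and] at hx
      rw [mem_VS] at hx
      obtain ⟨hl, hh, hg⟩ := hx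
      have hne : l ≠ [] := by intro h; rw [h] at hl; simp at hl
      have h1 : (l ++ [j]).dropLast = l := List.dropLast_concat ..
      have h2 : l.getLastD i = a := by
        have := getLast?_eq_getLastD l hne i
        rw [hg] at this
        exact (Option.some.injEq _ _ ▸ this).symm
      have h2' : l.getLast?.getD i = a := by rw [hg]; rfl
      simp [h1, h2, h2']
    · intro l hl
      rw [mem_VS] at hl
      obtain ⟨hl1, hh, hg⟩ := hl
      have hne : l ≠ [] := by intro h; rw [h] at hl1; simp at hl1
      have : l.getLast hne = j := by
        rw [List.getLast?_eq_getLast hne] at hg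
        simpa using hg
      conv_rhs => rw [← List.dropLast_append_getLast (l := l) hne]
      rw [this]
    · rintro ⟨a, l⟩ hx
      simp only [Finset.mem_sigma, Finset.mem_univ, true_and] at hx
      rw [mem_VS] at hx
      obtain ⟨hl, hh, hg⟩ := hx
      have hne : l ≠ [] := by intro h; rw [h] at hl; simp at hl
      have h2 : l.getLastD i = a := by
        have := getLast?_eq_getLastD l hne i
        rw [hg] at this
        exact (Option.some.injEq _ _ ▸ this).symm
      rw [EW_concat A l hne j i, h2]

end Paths

section Coeff

open Polynomial

variable {S : Type*} [CommSemiring S] {n : ℕ}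

/-- Pairs (permutation, subset of its fixed points) with subset of size `k`. -/
def QS (n k : ℕ) : Finset (Equiv.Perm (Fin n) × Finset (Fin n)) :=
  ((Finset.univ : Finset (Equiv.Perm (Fin n))) ×ˢ
    (Finset.univ : Finset (Finset (Fin n)))).filter
    (fun z => (∀ x ∈ z.2, z.1 x = x) ∧ z.2.card = k)

lemma mem_QS {n k : ℕ} {z : Equiv.Perm (Fin n) × Finset (Fin n)} :
    z ∈ QS n k ↔ (∀ x ∈ z.2, z.1 x = x) ∧ z.2.card = k := by
  simp [QS]

variable (A : Matrix (Fin n) (Fin n) S)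

lemma coeff_per_eq (k : ℕ) :
    (ST.per ((X : Polynomial S) • (1 : Matrix (Fin n) (Fin n) (Polynomial S)) + A.map C)).coeff k
      = ∑ z ∈ QS n k, ∏ x ∈ z.2ᶜ, A x (z.1 x) := by
  classical
  unfold ST.per
  have hM : ∀ (σ : Equiv.Perm (Fin n)),
      (List.ofFn fun i =>
        ((X : Polynomial S) • (1 : Matrix (Fin n) (Fin n) (Polynomial S)) + A.map C) i (σ i)).prod
      = ∑ T ∈ (Finset.univ.filter fun x : Fin n => σ x = x).powerset,
          (X : Polynomial S) ^ T.card * C (∏ x ∈ Tᶜ, A x (σ x)) := by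
    intro σ
    rw [List.prod_ofFn]
    rw [← Finset.prod_filter_mul_prod_filter_not Finset.univ (fun x => σ x = x)]
    have h1 : ∀ x ∈ Finset.univ.filter (fun x : Fin n => σ x = x),
        ((X : Polynomial S) • (1 : Matrix (Fin n) (Fin n) (Polynomial S)) + A.map C) x (σ x)
          = X + C (A x (σ x)) := by
      intro x hx
      rw [Finset.mem_filter] at hx
      have hfix : σ x = x := hx.2
      rw [Matrix.add_apply, Matrix.smul_apply, Matrix.map_apply,
        show (1 : Matrix (Fin n) (Fin n) (Polynomial S)) x (σ x) = 1 by
          rw [hfix, Matrix.one_apply_eq],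
        smul_eq_mul, mul_one]
    have h2 : ∀ x ∈ Finset.univ.filter (fun x : Fin n => ¬ σ x = x),
        ((X : Polynomial S) • (1 : Matrix (Fin n) (Fin n) (Polynomial S)) + A.map C) x (σ x)
          = C (A x (σ x)) := by
      intro x hx
      rw [Finset.mem_filter] at hx
      have : ¬ (x = σ x) := fun h => hx.2 h.symm
      simp [Matrix.add_apply, Matrix.smul_apply, Matrix.one_apply, Matrix.map_apply, this]
    rw [Finset.prod_congr rfl h1, Finset.prod_congr rfl h2]
    rw [Finset.prod_add, Finset.sum_mul]
    refine Finset.sum_congr rfl ?_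
    intro T hT
    rw [Finset.mem_powerset] at hT
    have hunion : (Finset.univ.filter (fun x : Fin n => σ x = x)) \ T
        ∪ Finset.univ.filter (fun x : Fin n => ¬ σ x = x) = Tᶜ := by
      ext x
      simp only [Finset.mem_union, Finset.mem_sdiff, Finset.mem_filter, Finset.mem_univ,
        true_and, Finset.mem_compl]
      constructor
      · rintro (⟨-, hx⟩ | hx)
        · exact hx
        · intro hxT
          exact hx ((Finset.mem_filter.mp (hT hxT)).2)
      · intro hx
        by_cases hfix : σ x = x
        · exact Or.inl ⟨hfix, hx⟩
        · exact Or.inr hfix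
    have hdisj : Disjoint ((Finset.univ.filter (fun x : Fin n => σ x = x)) \ T)
        (Finset.univ.filter (fun x : Fin n => ¬ σ x = x)) :=
      Finset.disjoint_of_subset_left (Finset.sdiff_subset)
        (Finset.disjoint_filter_filter_not _ _ _)
    rw [Finset.prod_const, mul_assoc, ← map_prod, ← map_prod, ← map_mul,
      ← Finset.prod_union hdisj, hunion]
  rw [Polynomial.finset_sum_coeff]
  simp_rw [hM, Polynomial.finset_sum_coeff, Polynomial.X_pow_mul,
    Polynomial.C_mul_X_pow_eq_monomial, Polynomial.coeff_monomial]
  rw [QS, Finset.sum_filter, Finset.sum_product]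
  refine Finset.sum_congr rfl ?_
  intro σ _
  rw [← Finset.univ_inter ((Finset.univ.filter fun x : Fin n => σ x = x).powerset),
    ← Finset.sum_ite_mem]
  refine Finset.sum_congr rfl ?_
  intro T _
  by_cases h1 : ∀ x ∈ T, σ x = x
  · have hmem : T ∈ (Finset.univ.filter fun x : Fin n => σ x = x).powerset := by
      rw [Finset.mem_powerset, Finset.subset_iff]
      intro x hx
      simp [h1 x hx]
    by_cases h2 : T.card = k
    · rw [if_pos hmem, if_pos h2, if_pos ⟨h1, h2⟩]
    · rw [if_pos hmem, if_neg h2, if_neg (fun h => h2 h.2)]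
  · have hmem : T ∉ (Finset.univ.filter fun x : Fin n => σ x = x).powerset := by
      rw [Finset.mem_powerset, Finset.subset_iff]
      intro hsub
      exact h1 (fun x hx => (Finset.mem_filter.mp (hsub hx)).2)
    rw [if_neg hmem, if_neg (fun h => h1 h.1)]

end Coeff

section Core

variable {S : Type*} [CommSemiring S] {n : ℕ} (A : Matrix (Fin n) (Fin n) S)

lemma EW_eq_zip (l : List (Fin n)) :
    EW A l = ((l.zip l.tail).map fun q => A q.1 q.2).prod := by
  induction l with
  | nil => simp
  | cons a l ih =>
    cases l with
    | nil => simp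
    | cons b l' =>
      rw [EW_cons_cons, ih]
      simp [List.zip_cons_cons]

lemma prod_formPerm_eq_EW (c : List (Fin n)) (hnd : c.Nodup) (a : Fin n)
    (hh : c.head? = some a) :
    ∏ x ∈ c.toFinset, A x (c.formPerm x) = EW A (c ++ [a]) := by
  classical
  rw [List.prod_toFinset _ hnd, EW_eq_zip]
  cases c with
  | nil => simp at hh
  | cons a' t =>
    rw [List.head?_cons, Option.some.injEq] at hh
    subst hh
    have htail : ((a' :: t) ++ [a']).tail = t ++ [a'] := rfl
    rw [htail]
    have hzip : ((a' :: t) ++ [a']).zip (t ++ [a'])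
        = (a' :: t).zip (t ++ [a']) := by
      have := List.zip_append (l₁ := a' :: t) (r₁ := [a']) (l₂ := t ++ [a']) (r₂ := [])
        (by simp)
      simpa using this
    rw [hzip]
    congr 1
    apply List.ext_getElem
    · simp
    · intro m h1 h2
      rw [List.getElem_map, List.getElem_map, List.getElem_zip]
      simp only [List.length_map] at h1
      have hm : m < (a' :: t).length := h1
      rw [List.formPerm_apply_getElem _ hnd m hm]
      congr 1
      rcases Nat.lt_or_ge m t.length with hlt | hge
      · have hmod : (m + 1) % (a' :: t).length = m + 1 := by
          apply Nat.mod_eq_of_lt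
          simpa using Nat.succ_lt_succ hlt
        simp only [hmod]
        rw [List.getElem_append_left (by simpa using hlt)]
        simp
      · have hm' : m = t.length := by
          have : m < t.length + 1 := by simpa using hm
          omega
        subst hm'
        have hmod : (t.length + 1) % (a' :: t).length = 0 := by
          simp [Nat.mod_self]
        simp only [hmod]
        have h3 : (t ++ [a'])[t.length]'(by simp) = a' := List.getElem_concat_length rfl (by simp)
        simp [h3]

lemma core_weight (σ : Equiv.Perm (Fin n)) (T : Finset (Fin n)) (c u w : List (Fin n))
    (a : Fin n) (hnd : c.Nodup) (hh : c.head? = some a)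
    (hdisj : ∀ x ∈ c, x ∉ T) (hfixc : ∀ x ∈ c, σ x = x) :
    (∏ x ∈ Tᶜ, A x ((σ * c.formPerm) x)) * EW A (u ++ a :: w)
      = (∏ x ∈ (T ∪ c.toFinset)ᶜ, A x (σ x)) * EW A (u ++ a :: (c.tail ++ a :: w)) := by
  classical
  cases c with
  | nil => simp at hh
  | cons a' t =>
    rw [List.head?_cons, Option.some.injEq] at hh
    subst hh
    have hsubset : (a' :: t).toFinset ⊆ Tᶜ := fun x hx =>
      Finset.mem_compl.mpr (hdisj x (List.mem_toFinset.mp hx))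
    have hTc : (T ∪ (a' :: t).toFinset)ᶜ = Tᶜ \ (a' :: t).toFinset := by
      ext x
      simp only [Finset.mem_compl, Finset.mem_union, Finset.mem_sdiff]
      tauto
    have hsp : EW A (a' :: (t ++ a' :: w)) = EW A ((a' :: t) ++ [a']) * EW A (a' :: w) := by
      have h := EW_split A (a' :: t) a' w
      simpa using h
    have hprod : ∏ x ∈ Tᶜ, A x ((σ * (a' :: t).formPerm) x)
        = (∏ x ∈ Tᶜ \ (a' :: t).toFinset, A x (σ x)) * EW A ((a' :: t) ++ [a']) := by
      rw [← Finset.prod_sdiff hsubset]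
      congr 1
      · refine Finset.prod_congr rfl ?_
        intro x hx
        have hxc : x ∉ (a' :: t) := fun hm =>
          (Finset.mem_sdiff.mp hx).2 (List.mem_toFinset.mpr hm)
        rw [Equiv.Perm.mul_apply, List.formPerm_apply_of_notMem hxc]
      · rw [← prod_formPerm_eq_EW A (a' :: t) hnd a' rfl]
        refine Finset.prod_congr rfl ?_
        intro x hx
        have hxc : x ∈ (a' :: t) := List.mem_toFinset.mp hx
        rw [Equiv.Perm.mul_apply,
          hfixc _ (List.formPerm_apply_mem_of_mem hxc)]
    rw [hTc]
    simp only [List.tail_cons]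
    rw [EW_split A u a' w, EW_split A u a' (t ++ a' :: w), hsp, hprod]
    ring

end Core

section Match

lemma head?_append_cons {α : Type*} (u : List α) (a : α) (w w' : List α) :
    (u ++ a :: w).head? = (u ++ a :: w').head? := by
  cases u <;> simp

lemma getLast?_append_cons {α : Type*} (u : List α) (a : α) (w : List α) :
    (u ++ a :: w).getLast? = (a :: w).getLast? := by
  rw [List.getLast?_append, List.getLast?_eq_getLast (l := a :: w) (by simp)]
  rfl

lemma dup_decomp {α : Type*} [DecidableEq α] : ∀ (l : List α), ¬ l.Nodup →
    ∃ (a : α) (u v w : List α), l = u ++ a :: (v ++ a :: w) ∧ (a :: v).Nodup := by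
  intro l
  induction l with
  | nil => intro h; exact absurd List.nodup_nil h
  | cons x l ih =>
    intro h
    by_cases h' : l.Nodup
    · have hx : x ∈ l := by
        by_contra hx
        exact h (List.nodup_cons.mpr ⟨hx, h'⟩)
      obtain ⟨v, w, rfl⟩ := List.append_of_mem hx
      have hv : v.Nodup := (List.sublist_append_left v (x :: w)).nodup h'
      have hxv : x ∉ v := by
        intro hxv
        exact (List.disjoint_of_nodup_append h') hxv (by simp)
      exact ⟨x, [], v, w, by simp, List.nodup_cons.mpr ⟨hxv, hv⟩⟩
    · obtain ⟨a, u, v, w, hl, hnd⟩ := ih h'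
      exact ⟨a, x :: u, v, w, by rw [hl]; rfl, hnd⟩

variable {S : Type*} [CommSemiring S] {n : ℕ} (A : Matrix (Fin n) (Fin n) S)

/-- Configurations: (permutation with chosen fixed subset, path). -/
def CFG (i j : Fin n) (k : ℕ) :
    Finset ((Equiv.Perm (Fin n) × Finset (Fin n)) × List (Fin n)) :=
  QS n k ×ˢ VS i j k

/-- The weight monomial of a configuration. -/
def tval (z : (Equiv.Perm (Fin n) × Finset (Fin n)) × List (Fin n)) : S :=
  (∏ x ∈ z.1.2ᶜ, A x (z.1.1 x)) * EW A z.2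

lemma exists_match (i j : Fin n) (k : ℕ)
    (z : (Equiv.Perm (Fin n) × Finset (Fin n)) × List (Fin n)) (hz : z ∈ CFG i j k) :
    ∃ k', k' ∈ Finset.range (n + 1) ∧ k' ≠ k ∧
      ∃ y ∈ CFG i j k', tval A y = tval A z := by
  classical
  obtain ⟨⟨π, T⟩, l⟩ := z
  rw [CFG, Finset.mem_product] at hz
  obtain ⟨hQ, hV⟩ := hz
  rw [mem_QS] at hQ
  rw [mem_VS] at hV
  obtain ⟨hfixT, hcard⟩ := hQ
  obtain ⟨hlen, hhead, hlast⟩ := hV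
  dsimp only at hfixT hcard hlen hhead hlast
  by_cases hall : ∀ x ∈ l, x ∈ T
  · -- Case B : all path vertices lie in T, so the path has a repeated vertex.
    have hndl : ¬ l.Nodup := by
      intro hnd
      have h1 : l.toFinset ⊆ T := fun x hx => hall x (List.mem_toFinset.mp hx)
      have h2 := Finset.card_le_card h1
      rw [List.toFinset_card_of_nodup hnd, hlen, hcard] at h2
      omega
    obtain ⟨a, u, v, w, hdec, hnd2⟩ := dup_decomp l hndl
    have hcl : ∀ x ∈ (a :: v), x ∈ l := by
      intro x hx
      rw [hdec]
      rcases List.mem_cons.mp hx with rfl | hxv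
      · simp
      · simp [hxv]
    have hcT : ∀ x ∈ (a :: v), x ∈ T := fun x hx => hall x (hcl x hx)
    have hsub : (a :: v).toFinset ⊆ T := fun x hx => hcT x (List.mem_toFinset.mp hx)
    have hccard : (a :: v).toFinset.card = v.length + 1 := by
      rw [List.toFinset_card_of_nodup hnd2]; rfl
    have hlk : v.length + 1 ≤ k := by
      have := Finset.card_le_card hsub
      rw [hccard, hcard] at this; exact this
    have hkn : k ≤ n := by
      rw [← hcard]
      exact (Finset.card_le_univ T).trans (by simp)
    have hcore := core_weight A π (T \ (a :: v).toFinset) (a :: v) u w a hnd2 rfl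
      (fun x hx hmem => (Finset.mem_sdiff.mp hmem).2 (List.mem_toFinset.mpr hx))
      (fun x hx => hfixT x (hcT x hx))
    rw [Finset.sdiff_union_of_subset hsub, List.tail_cons, ← hdec] at hcore
    refine ⟨k - (v.length + 1), by rw [Finset.mem_range]; omega, by omega,
      ⟨⟨π * (a :: v).formPerm, T \ (a :: v).toFinset⟩, u ++ a :: w⟩, ?_, ?_⟩
    · rw [CFG, Finset.mem_product, mem_QS, mem_VS]
      refine ⟨⟨?_, ?_⟩, ?_, ?_, ?_⟩
      · intro x hx
        rw [Finset.mem_sdiff] at hx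
        rw [Equiv.Perm.mul_apply,
          List.formPerm_apply_of_notMem (fun hm => hx.2 (List.mem_toFinset.mpr hm)),
          hfixT x hx.1]
      · rw [Finset.card_sdiff_of_subset hsub, hccard, hcard]
      · have h1 : l.length = u.length + (v.length + w.length + 2) := by
          rw [hdec]; simp; omega
        simp only [List.length_append, List.length_cons]
        omega
      · rw [head?_append_cons u a w (v ++ a :: w), ← hdec, hhead]
      · rw [getLast?_append_cons u a w, ← hlast, hdec]
        have h2 : u ++ a :: (v ++ a :: w) = (u ++ a :: v) ++ a :: w := by simp
        rw [h2, getLast?_append_cons (u ++ a :: v) a w]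
    · rw [tval, tval]
      exact hcore
  · -- Case A : some path vertex is outside T.
    push_neg at hall
    obtain ⟨a, hal, haT⟩ := hall
    obtain ⟨u, w, hdec⟩ := List.append_of_mem hal
    have hkn : k ≤ n := by
      rw [← hcard]
      exact (Finset.card_le_univ T).trans (by simp)
    by_cases hfa : π a = a
    · -- the cycle is a loop at `a`
      have hcore := core_weight A π T [a] u w a (by simp) rfl
        (fun x hx => by rw [List.mem_singleton] at hx; subst hx; exact haT)
        (fun x hx => by rw [List.mem_singleton] at hx; subst hx; exact hfa)
      rw [List.formPerm_singleton, mul_one, List.tail_cons] at hcore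
      have hkcard : (T ∪ ([a] : List (Fin n)).toFinset).card = k + 1 := by
        rw [Finset.card_union_of_disjoint (by simp [Finset.disjoint_singleton_right, haT]),
          hcard]
        simp
      have hle : k + 1 ≤ n := by
        have h3 := Finset.card_le_univ (T ∪ ([a] : List (Fin n)).toFinset)
        rw [hkcard] at h3
        simpa using h3
      refine ⟨k + 1, by rw [Finset.mem_range]; omega, by omega,
        ⟨⟨π, T ∪ ([a] : List (Fin n)).toFinset⟩, u ++ a :: ([] ++ a :: w)⟩, ?_, ?_⟩
      · rw [CFG, Finset.mem_product, mem_QS, mem_VS]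
        refine ⟨⟨?_, hkcard⟩, ?_, ?_, ?_⟩
        · intro x hx
          rcases Finset.mem_union.mp hx with hx | hx
          · exact hfixT x hx
          · simp only [List.toFinset_cons, List.toFinset_nil, insert_empty_eq,
              Finset.mem_singleton] at hx
            subst hx; exact hfa
        · have h1 : l.length = u.length + w.length + 1 := by rw [hdec]; simp; omega
          simp only [List.length_append, List.length_cons, List.nil_append, List.length_nil]
          omega
        · rw [List.nil_append, head?_append_cons u a (a :: w) w, ← hdec, hhead]
        · rw [List.nil_append]
          have h2 : u ++ a :: a :: w = (u ++ [a]) ++ a :: w := by simp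
          rw [h2, getLast?_append_cons (u ++ [a]) a w, ← getLast?_append_cons u a w, ← hdec,
            hlast]
      · rw [tval, tval]
        dsimp only
        rw [← hcore, hdec]
    · -- genuine cycle of `π` through `a`
      have hasupp : a ∈ π.support := Equiv.Perm.mem_support.mpr hfa
      have hnd := Equiv.Perm.nodup_toList π a
      have hlenpos : 0 < (π.toList a).length :=
        Equiv.Perm.length_toList_pos_of_mem_support _ _ hasupp
      have hb : (π.toList a).head? = some a := by
        rw [List.head?_eq_getElem?, List.getElem?_eq_getElem hlenpos]
        have h0 := Equiv.Perm.toList_getElem_zero hasupp (p := π) (x := a)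
        simpa [List.get_eq_getElem] using h0
      obtain ⟨t, hct⟩ : ∃ t, π.toList a = a :: t := by
        cases hcl : π.toList a with
        | nil => rw [hcl] at hlenpos; simp at hlenpos
        | cons b t =>
          rw [hcl, List.head?_cons, Option.some.injEq] at hb
          exact ⟨t, by rw [hb]⟩
      have hmemc : ∀ x, x ∈ π.toList a ↔ π.SameCycle a x := by
        intro x
        rw [Equiv.Perm.mem_toList_iff]
        exact ⟨fun h => h.1, fun h => ⟨h, hasupp⟩⟩
      have hdisj : ∀ x ∈ π.toList a, x ∉ T := by
        intro x hx hxT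
        have hsc := ((hmemc x).mp hx).symm
        obtain ⟨m, -, hm⟩ := hsc.exists_pow_eq'
        have hfixpow : ∀ m : ℕ, (π ^ m) x = x := by
          intro m
          induction m with
          | zero => simp
          | succ m ih => rw [pow_succ, Equiv.Perm.mul_apply, hfixT x hxT, ih]
        rw [hfixpow m] at hm
        exact haT (hm ▸ hxT)
      have hρ : (π.toList a).formPerm = π.cycleOf a := Equiv.Perm.formPerm_toList π a
      have hfixc0 : ∀ x ∈ π.toList a, (π * (π.toList a).formPerm⁻¹) x = x := by
        intro x hx
        have hsc := (hmemc x).mp hx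
        have h1 : (π.toList a).formPerm (π⁻¹ x) = x := by
          rw [hρ, Equiv.Perm.cycleOf_apply,
            if_pos (show π.SameCycle a (π⁻¹ x) from Equiv.Perm.sameCycle_symm_apply_right.mpr hsc)]
          exact Equiv.apply_symm_apply π x
        have h2 : (π.toList a).formPerm⁻¹ x = π⁻¹ x := by
          rw [Equiv.Perm.inv_eq_iff_eq]
          exact h1.symm
        rw [Equiv.Perm.mul_apply, h2]; exact Equiv.apply_symm_apply π x
      have hfixT0 : ∀ x ∈ T, (π * (π.toList a).formPerm⁻¹) x = x := by
        intro x hxT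
        have hxc : x ∉ π.toList a := fun hxc => hdisj x hxc hxT
        have h2 : (π.toList a).formPerm⁻¹ x = x := by
          rw [Equiv.Perm.inv_eq_iff_eq]
          exact (List.formPerm_apply_of_notMem hxc).symm
        rw [Equiv.Perm.mul_apply, h2, hfixT x hxT]
      have hcore := core_weight A (π * (π.toList a).formPerm⁻¹) T (π.toList a) u w a hnd
        hb hdisj hfixc0
      rw [inv_mul_cancel_right] at hcore
      have hdisjTC : Disjoint T (π.toList a).toFinset := by
        rw [Finset.disjoint_right]
        intro x hx
        exact fun hxT => hdisj x (List.mem_toFinset.mp hx) hxT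
      have hkcard : (T ∪ (π.toList a).toFinset).card = k + (π.toList a).length := by
        rw [Finset.card_union_of_disjoint hdisjTC, hcard,
          List.toFinset_card_of_nodup hnd]
      refine ⟨k + (π.toList a).length, by
          rw [Finset.mem_range, ← hkcard]
          exact Nat.lt_succ_of_le ((Finset.card_le_univ _).trans (by simp)), by omega,
        ⟨⟨π * (π.toList a).formPerm⁻¹, T ∪ (π.toList a).toFinset⟩,
          u ++ a :: ((π.toList a).tail ++ a :: w)⟩, ?_, ?_⟩
      · rw [CFG, Finset.mem_product, mem_QS, mem_VS]
        refine ⟨⟨?_, hkcard⟩, ?_, ?_, ?_⟩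
        · intro x hx
          rcases Finset.mem_union.mp hx with hx | hx
          · exact hfixT0 x hx
          · exact hfixc0 x (List.mem_toFinset.mp hx)
        · have h1 : l.length = u.length + w.length + 1 := by rw [hdec]; simp; omega
          have h2 : (π.toList a).tail.length = (π.toList a).length - 1 := by
            rw [hct]; rfl
          simp only [List.length_append, List.length_cons]
          omega
        · rw [head?_append_cons u a ((π.toList a).tail ++ a :: w) w, ← hdec, hhead]
        · have h2 : u ++ a :: ((π.toList a).tail ++ a :: w)
              = (u ++ a :: (π.toList a).tail) ++ a :: w := by simp
          rw [h2, getLast?_append_cons (u ++ a :: (π.toList a).tail) a w,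
            ← getLast?_append_cons u a w, ← hdec, hlast]
      · rw [tval, tval]
        dsimp only
        rw [← hcore, hdec]

end Match

section Assemble
open ST

lemma retract_nu {R : Type*} [SupertropicalDomain R] (f : ST.TangibleRetract R) (a : R) :
    f a + f a = a + a := by
  by_cases h : ghost a
  · rw [f.nu_section a h, ghost_idem h]
  · rw [f.id_on_T0 a (Or.inr h)]

lemma expand_coeff_mul_pow {R : Type*} [CommSemiring R] {n : ℕ}
    (A : Matrix (Fin n) (Fin n) R) (i j : Fin n) (k : ℕ) :
    (ST.per ((Polynomial.X : Polynomial R) • (1 : Matrix (Fin n) (Fin n) (Polynomial R))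
        + A.map Polynomial.C)).coeff k * (A ^ k) i j
      = ∑ z ∈ CFG i j k, tval A z := by
  rw [coeff_per_eq, pow_apply_eq_sum_VS, Finset.sum_mul_sum, CFG, Finset.sum_product]
  rfl

end Assemble

/-- Every matrix satisfies its tangible characteristic polynomial
up to ghost: with `f_A(λ) = |A + λ I| = ∑ αᵢ λⁱ`, the matrix
`∑ ν̂(αᵢ) Aⁱ` is a ghost matrix. -/
theorem tangible_char_poly_ghost {R : Type*} [SupertropicalDomain R]
    (f : ST.TangibleRetract R) {n : ℕ} (A : Matrix (Fin n) (Fin n) R) :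
    ∀ i j, ST.ghost
      ((∑ k ∈ Finset.range (n + 1),
          f ((ST.per ((Polynomial.X : Polynomial R) • (1 : Matrix (Fin n) (Fin n) (Polynomial R))
              + A.map Polynomial.C)).coeff k) • A ^ k) i j) := by
  intro i j
  letI : CommSemiring R := { (inferInstance : Semiring R) with
    mul_comm := SupertropicalDomain.mul_comm }
  rw [Matrix.sum_apply]
  simp only [Matrix.smul_apply, smul_eq_mul]
  apply ghost_sum_of_matched (Finset.range (n + 1))
    (fun k => f ((ST.per ((Polynomial.X : Polynomial R) •
      (1 : Matrix (Fin n) (Fin n) (Polynomial R)) + A.map Polynomial.C)).coeff k) * (A ^ k) i j)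
    (fun k => CFG i j k) (tval A)
  · intro k _
    set α := (ST.per ((Polynomial.X : Polynomial R) •
      (1 : Matrix (Fin n) (Fin n) (Polynomial R)) + A.map Polynomial.C)).coeff k with hα
    calc f α * (A ^ k) i j + f α * (A ^ k) i j
        = (f α + f α) * (A ^ k) i j := (add_mul _ _ _).symm
      _ = (α + α) * (A ^ k) i j := by rw [retract_nu]
      _ = α * (A ^ k) i j + α * (A ^ k) i j := add_mul _ _ _
      _ = (∑ z ∈ CFG i j k, tval A z) + (∑ z ∈ CFG i j k, tval A z) := by
          rw [expand_coeff_mul_pow]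
      _ = ∑ z ∈ CFG i j k, (tval A z + tval A z) := Finset.sum_add_distrib.symm
  · intro k _ x hx
    exact exists_match A i j k x hx
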